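/- Let σ > 0, integer d ≥ 1, and positive reals r_11,…,r_nn with max_i r_ii ≤ 2σ·r(√(2π)/(2d)). Let γ = (∏_{i=1}^n r_ii)^{1/n}. Then ∏_{i=1}^n [1/(d+1) + (d/(d+1))·φ_σ(r_ii)] ≥ [1/(d+1) + (d/(d+1))·φ_σ(γ)]^n, with equality if and only if r_11 = ⋯ = r_nn = γ. -/

import Mathlib

noncomputable def phi (σ ζ : ℝ) : ℝ :=
  (2 / Real.sqrt (2 * Real.pi)) * ∫ t in (0:ℝ)..(ζ / (2 * σ)), Real.exp (-t ^ 2 / 2)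

noncomputable def f (ζ α : ℝ) : ℝ :=
  (1 - ζ ^ 2) * (α + ∫ t in (0:ℝ)..ζ, Real.exp (-t ^ 2 / 2)) - ζ * Real.exp (-ζ ^ 2 / 2)

/-!
Put `g = gaussPrimitive α`, i.e. `g(ζ) = α + ∫₀^ζ exp(-t²/2)`, with `α = √(2π)/(2d)`; then
`1/(d+1) + d/(d+1) φ_σ(x)` is a constant multiple of `g(x/(2σ))`. The derivative of
`u ↦ log g(eᵘ)` is `ψ(eᵘ)` with `ψ(x) = gaussRatio α x = x exp(-x²/2) / g(x)`, and
`ψ'(x) = exp(-x²/2) f(x, α) / g(x)²`. Since `∂_ζ f(ζ, α) = -2ζ g(ζ) < 0`, `f(·, α)` is positive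
below its root `rα`, so `u ↦ log g(eᵘ)` is strictly convex while `eᵘ ≤ rα`. Jensen's inequality
with equal weights at the points `log rᵢ`, exponentiated, is the product inequality, and strict
convexity gives the equality case.
-/

open Real Set

noncomputable def gaussPrimitive (α ζ : ℝ) : ℝ := α + ∫ t in (0:ℝ)..ζ, exp (-t ^ 2 / 2)

noncomputable def gaussRatio (α x : ℝ) : ℝ := x * exp (-x ^ 2 / 2) / gaussPrimitive α x

lemma hasDerivAt_exp_neg_sq_div_two (x : ℝ) :
    HasDerivAt (fun x : ℝ => exp (-x ^ 2 / 2)) (-x * exp (-x ^ 2 / 2)) x := by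
  have h : HasDerivAt (fun x : ℝ => -x ^ 2 / 2) (-x) x := by
    simpa using ((hasDerivAt_pow 2 x).neg.div_const 2).congr_deriv (by ring)
  exact h.exp.congr_deriv (mul_comm _ _)

lemma hasDerivAt_gaussPrimitive (α ζ : ℝ) :
    HasDerivAt (gaussPrimitive α) (exp (-ζ ^ 2 / 2)) ζ := by
  have hc : Continuous fun t : ℝ => exp (-t ^ 2 / 2) := by fun_prop
  exact (intervalIntegral.integral_hasDerivAt_right (hc.intervalIntegrable 0 ζ)
    (hc.stronglyMeasurableAtFilter _ _) hc.continuousAt).const_add α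

lemma gaussPrimitive_pos {α ζ : ℝ} (hα : 0 < α) (hζ : 0 ≤ ζ) : 0 < gaussPrimitive α ζ :=
  add_pos_of_pos_of_nonneg hα
    (intervalIntegral.integral_nonneg hζ fun _ _ => (exp_pos _).le)

lemma f_eq_gaussPrimitive (ζ α : ℝ) :
    f ζ α = (1 - ζ ^ 2) * gaussPrimitive α ζ - ζ * exp (-ζ ^ 2 / 2) :=
  rfl

lemma hasDerivAt_f (α ζ : ℝ) : HasDerivAt (fun ζ => f ζ α) (-2 * ζ * gaussPrimitive α ζ) ζ :=
  ((((hasDerivAt_pow 2 ζ).const_sub 1).mul (hasDerivAt_gaussPrimitive α ζ)).sub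
    ((hasDerivAt_id ζ).mul (hasDerivAt_exp_neg_sq_div_two ζ))).congr_deriv (by simp; ring)

lemma strictAntiOn_f {α : ℝ} (hα : 0 < α) : StrictAntiOn (fun ζ => f ζ α) (Ici 0) := by
  refine strictAntiOn_of_deriv_neg (convex_Ici 0)
    (fun x _ => (hasDerivAt_f α x).continuousAt.continuousWithinAt) fun x hx => ?_
  rw [interior_Ici, mem_Ioi] at hx
  rw [(hasDerivAt_f α x).deriv]
  have := gaussPrimitive_pos hα hx.le
  nlinarith

lemma f_pos_of_lt {α R ζ : ℝ} (hα : 0 < α) (hR : f R α = 0) (h0 : 0 < ζ) (hζR : ζ < R) :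
    0 < f ζ α :=
  hR ▸ strictAntiOn_f hα h0.le (h0.trans hζR).le hζR

lemma hasDerivAt_gaussRatio {α x : ℝ} (hα : 0 < α) (hx : 0 ≤ x) :
    HasDerivAt (gaussRatio α) (exp (-x ^ 2 / 2) * f x α / gaussPrimitive α x ^ 2) x :=
  (((hasDerivAt_id x).mul (hasDerivAt_exp_neg_sq_div_two x)).div
    (hasDerivAt_gaussPrimitive α x) (gaussPrimitive_pos hα hx).ne').congr_deriv
    (by simp only [f_eq_gaussPrimitive, Pi.mul_apply, id]; ring)

lemma strictMonoOn_gaussRatio {α R : ℝ} (hα : 0 < α) (hR : f R α = 0) :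
    StrictMonoOn (gaussRatio α) (Icc 0 R) := by
  refine strictMonoOn_of_deriv_pos (convex_Icc 0 R)
    (fun x hx => (hasDerivAt_gaussRatio hα hx.1).continuousAt.continuousWithinAt)
    fun x hx => ?_
  rw [interior_Icc] at hx
  rw [(hasDerivAt_gaussRatio hα hx.1.le).deriv]
  have := f_pos_of_lt hα hR hx.1 hx.2
  have := gaussPrimitive_pos hα hx.1.le
  positivity

lemma hasDerivAt_log_gaussPrimitive_exp_div {α c : ℝ} (hα : 0 < α) (hc : 0 < c) (u : ℝ) :
    HasDerivAt (fun u => log (gaussPrimitive α (exp u / c))) (gaussRatio α (exp u / c)) u := by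
  have hx : 0 < exp u / c := by positivity
  exact (((hasDerivAt_gaussPrimitive α _).comp u
    ((hasDerivAt_exp u).div_const c)).log (gaussPrimitive_pos hα hx.le).ne').congr_deriv
    (by simp only [gaussRatio, Function.comp_apply]; ring)

theorem strictConvexOn_log_gaussPrimitive_exp_div {α c R : ℝ} (hα : 0 < α) (hc : 0 < c)
    (hR0 : 0 < R) (hR : f R α = 0) :
    StrictConvexOn ℝ (Iic (log (c * R))) (fun u => log (gaussPrimitive α (exp u / c))) := by
  refine StrictMonoOn.strictConvexOn_of_deriv (convex_Iic _)
    (fun u _ => (hasDerivAt_log_gaussPrimitive_exp_div hα hc u).continuousAt.continuousWithinAt)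
    ?_
  rw [interior_Iic]
  intro u hu v hv huv
  have hmem : ∀ w ∈ Iio (log (c * R)), exp w / c ∈ Icc 0 R := fun w hw => by
    have := (lt_log_iff_exp_lt (by positivity)).1 hw
    exact ⟨by positivity, (div_le_iff₀' hc).2 this.le⟩
  simp only [(hasDerivAt_log_gaussPrimitive_exp_div hα hc _).deriv]
  exact strictMonoOn_gaussRatio hα hR (hmem u hu) (hmem v hv)
    (div_lt_div_of_pos_right (exp_lt_exp.2 huv) hc)

section GeomMean

variable {ι : Type*} [Fintype ι]

lemma rpow_one_div_card_eq_exp {s : ι → ℝ} (hs : ∀ i, 0 < s i) :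
    (∏ i, s i) ^ ((1 : ℝ) / Fintype.card ι) =
      exp (∑ i, (1 / (Fintype.card ι : ℝ)) • log (s i)) := by
  rw [rpow_def_of_pos (Finset.prod_pos fun i _ => hs i), log_prod fun i _ => (hs i).ne',
    Finset.sum_mul]
  simp only [smul_eq_mul, mul_comm]

theorem pow_geomMean_le_prod_of_strictConvexOn_log_exp [Nonempty ι] {F : ℝ → ℝ} {D : Set ℝ}
    (hF : StrictConvexOn ℝ D fun u => log (F (exp u))) (hFpos : ∀ x, 0 < x → 0 < F x)
    {s : ι → ℝ} (hs : ∀ i, 0 < s i) (hsD : ∀ i, log (s i) ∈ D) :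
    F ((∏ i, s i) ^ ((1 : ℝ) / Fintype.card ι)) ^ Fintype.card ι ≤ ∏ i, F (s i) ∧
      (∏ i, F (s i) = F ((∏ i, s i) ^ ((1 : ℝ) / Fintype.card ι)) ^ Fintype.card ι ↔
        ∀ i, s i = (∏ i, s i) ^ ((1 : ℝ) / Fintype.card ι)) := by
  set n := Fintype.card ι
  have hn : (0 : ℝ) < n := Nat.cast_pos.2 Fintype.card_pos
  set w : ι → ℝ := fun _ => 1 / (n : ℝ)
  have hw : ∑ i, w i = 1 := by simp [w, n]
  have hw0 : ∀ i ∈ Finset.univ, 0 < w i := fun _ _ => by positivity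
  set h : ℝ → ℝ := fun u => log (F (exp u))
  set m := ∑ i, w i • log (s i)
  have hγ : (∏ i, s i) ^ ((1 : ℝ) / n) = exp m := rpow_one_div_card_eq_exp hs
  have hlogL : log (∏ i, F (s i)) = n * ∑ i, w i • h (log (s i)) := by
    rw [log_prod fun i _ => (hFpos _ (hs i)).ne', Finset.mul_sum]
    refine Finset.sum_congr rfl fun i _ => ?_
    simp only [h, w, exp_log (hs i), smul_eq_mul]
    field_simp
  have hlogR : log (F (exp m) ^ n) = n * h m := log_pow _ _
  have hL : 0 < ∏ i, F (s i) := Finset.prod_pos fun i _ => hFpos _ (hs i)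
  have hR : 0 < F (exp m) ^ n := pow_pos (hFpos _ (exp_pos m)) n
  rw [hγ]
  constructor
  · rw [← log_le_log_iff hR hL, hlogR, hlogL]
    gcongr
    exact hF.convexOn.map_sum_le (fun i hi => (hw0 i hi).le) hw fun i _ => hsD i
  · rw [← log_injOn_pos.eq_iff hL hR, hlogL, hlogR, mul_right_inj' hn.ne', eq_comm,
      hF.map_sum_eq_iff hw0 hw fun i _ => hsD i]
    refine forall_congr' fun i => ?_
    rw [← exp_eq_exp, exp_log (hs i)]
    simp [m]

end GeomMean

lemma mixture_phi_eq_mul_gaussPrimitive {d : ℝ} (hd : 0 < d) (σ x : ℝ) :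
    1 / (d + 1) + d / (d + 1) * phi σ x =
      2 * d / ((d + 1) * sqrt (2 * π)) *
        gaussPrimitive (sqrt (2 * π) / (2 * d)) (x / (2 * σ)) := by
  have : 0 < sqrt (2 * π) := by positivity
  simp only [phi, gaussPrimitive]
  field_simp

theorem stmt17_general (n : ℕ) (hn : 0 < n) (σ : ℝ) (hσ : 0 < σ) (d : ℕ) (hd : 1 ≤ d)
    (r : Fin n → ℝ) (hr : ∀ i, 0 < r i)
    (rα : ℝ) (hrz : f rα (Real.sqrt (2 * Real.pi) / (2 * d)) = 0)
    (hmax : ∀ i, r i ≤ 2 * σ * rα) :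
    ∏ i, (1 / ((d : ℝ) + 1) + (d : ℝ) / ((d : ℝ) + 1) * phi σ (r i)) ≥
      (1 / ((d : ℝ) + 1) +
        (d : ℝ) / ((d : ℝ) + 1) * phi σ ((∏ i, r i) ^ ((1 : ℝ) / n))) ^ n ∧
    ((∏ i, (1 / ((d : ℝ) + 1) + (d : ℝ) / ((d : ℝ) + 1) * phi σ (r i)) =
        (1 / ((d : ℝ) + 1) +
          (d : ℝ) / ((d : ℝ) + 1) * phi σ ((∏ i, r i) ^ ((1 : ℝ) / n))) ^ n) ↔
      ∀ i, r i = (∏ i, r i) ^ ((1 : ℝ) / n)) := by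
  have hd0 : (0 : ℝ) < d := by exact_mod_cast hd
  have h2σ : 0 < 2 * σ := by positivity
  have hrα : 0 < rα := pos_of_mul_pos_right ((hr ⟨0, hn⟩).trans_le (hmax ⟨0, hn⟩)) h2σ.le
  have hα : 0 < sqrt (2 * π) / (2 * d) := by positivity
  have hC : 0 < 2 * d / ((d + 1) * sqrt (2 * π)) := by positivity
  have hF := mixture_phi_eq_mul_gaussPrimitive hd0 σ
  have hFpos (x : ℝ) (hx : 0 < x) : 0 < 1 / ((d : ℝ) + 1) + d / (d + 1) * phi σ x := by
    rw [hF]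
    exact mul_pos hC (gaussPrimitive_pos hα (by positivity))
  have hconv : StrictConvexOn ℝ (Iic (log (2 * σ * rα)))
      fun u => log (1 / ((d : ℝ) + 1) + d / (d + 1) * phi σ (exp u)) :=
    ((strictConvexOn_log_gaussPrimitive_exp_div hα h2σ hrα hrz).add_const
      (log (2 * d / ((d + 1) * sqrt (2 * π))))).congr fun u _ => by
      rw [Pi.add_apply, hF, log_mul hC.ne' (gaussPrimitive_pos hα (by positivity)).ne', add_comm]
  have : Nonempty (Fin n) := ⟨⟨0, hn⟩⟩
  simpa only [Fintype.card_fin, ge_iff_le] using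
    pow_geomMean_le_prod_of_strictConvexOn_log_exp hconv hFpos hr
      fun i => mem_Iic.2 (log_le_log (hr i) (hmax i))

theorem stmt17 (n : ℕ) (hn : 0 < n) (σ : ℝ) (hσ : 0 < σ) (d : ℕ) (hd : 1 ≤ d)
    (r : Fin n → ℝ) (hr : ∀ i, 0 < r i)
    (rα : ℝ) (hr0 : 0 ≤ rα) (hrz : f rα (Real.sqrt (2 * Real.pi) / (2 * d)) = 0)
    (hmax : ∀ i, r i ≤ 2 * σ * rα) :
    ∏ i, (1 / ((d : ℝ) + 1) + (d : ℝ) / ((d : ℝ) + 1) * phi σ (r i)) ≥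
      (1 / ((d : ℝ) + 1) +
        (d : ℝ) / ((d : ℝ) + 1) * phi σ ((∏ i, r i) ^ ((1 : ℝ) / n))) ^ n ∧
    ((∏ i, (1 / ((d : ℝ) + 1) + (d : ℝ) / ((d : ℝ) + 1) * phi σ (r i)) =
        (1 / ((d : ℝ) + 1) +
          (d : ℝ) / ((d : ℝ) + 1) * phi σ ((∏ i, r i) ^ ((1 : ℝ) / n))) ^ n) ↔
      ∀ i, r i = (∏ i, r i) ^ ((1 : ℝ) / n)) :=
  stmt17_general n hn σ hσ d hd r hr rα hrz hmax
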